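/- arXiv:1704.01725 — 2 statements merged into one kernel-verified Lean document; each statement's English description precedes it below -/
import Mathlib

section
/- Let p : F → E be a functor, f : ξ → ξ' a cartesian morphism lying over φ : S → S', and ρ : G → Aut_S(ξ) a group homomorphism. Assume the kernel A = Aut_ξ(ξ') of the restriction homomorphism Aut_{S'}(ξ') → Aut_S(ξ) is abelian. Then there exists a group homomorphism ρ' : G → Aut_{S'}(ξ') with res ∘ ρ' = ρ (an extension of the G-action from ξ to ξ') if and only if the following two conditions hold: (1) for every σ ∈ G there exists σ' ∈ Aut_{S'}(ξ') with res(σ') = ρ(σ); and (2) for some (equivalently, for every) choice of a function Φ : G → Aut_{S'}(ξ') with res(Φ(σ)) = ρ(σ) for all σ, the function c : G × G → A defined by c(σ,τ) = Φ(σ) ∘ Φ(τ) ∘ Φ(στ)⁻¹ is a 2-coboundary, i.e. there exists b : G → A such that c(σ,τ) = (Φ(σ) ∘ b(τ) ∘ Φ(σ)⁻¹) ∘ b(στ)⁻¹ ∘ b(σ) for all σ, τ ∈ G. -/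
open CategoryTheory

/-- A morphism `f : ξ ⟶ ξ'` is cartesian for the functor `p : F ⥤ E` if for every
object `ζ` lying over `S = p.obj ξ`, composition with `f` gives a bijection between
morphisms `ζ ⟶ ξ` lying over `𝟙 S` and morphisms `ζ ⟶ ξ'` lying over `φ = p.map f`. -/
def IsCartesianMor {F E : Type*} [Category F] [Category E] (p : F ⥤ E)
    {ξ ξ' : F} (f : ξ ⟶ ξ') : Prop :=
  ∀ (ζ : F) (e : p.obj ζ = p.obj ξ),
    Function.Bijective (fun h : {h : ζ ⟶ ξ // p.map h = eqToHom e} =>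
      (⟨h.1 ≫ f, by rw [p.map_comp, h.2]⟩ :
        {g : ζ ⟶ ξ' // p.map g = eqToHom e ≫ p.map f}))

/-- The subgroup of `Aut ξ` consisting of automorphisms lying over the identity
of `S = p.obj ξ`. -/
def vertAut {F E : Type*} [Category F] [Category E] (p : F ⥤ E) (ξ : F) :
    Subgroup (Aut ξ) where
  carrier := {σ | p.map σ.hom = 𝟙 (p.obj ξ)}
  one_mem' := p.map_id ξ
  mul_mem' := by
    intro σ τ hσ hτ
    show p.map (τ.hom ≫ σ.hom) = 𝟙 _
    rw [p.map_comp, hσ, hτ, Category.id_comp]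
  inv_mem' := by
    intro σ hσ
    show p.map σ.symm.hom = 𝟙 _
    have h : p.map σ.hom = 𝟙 _ := hσ
    calc p.map σ.inv = p.map σ.hom ≫ p.map σ.inv := by rw [h, Category.id_comp]
      _ = p.map (σ.hom ≫ σ.inv) := (p.map_comp _ _).symm
      _ = 𝟙 _ := by exact (congrArg p.map (Iso.hom_inv_id _)).trans (p.map_id ξ)

/-! If `ρ'` lifts `ρ` and `Φ` is any set-theoretic lift, then `b σ = Φ σ * (ρ' σ)⁻¹` lies in the
kernel `A`; conversely, given `b` with values in `A`, `σ ↦ (b σ)⁻¹ * Φ σ` is again a lift of `ρ`.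
In both directions, multiplicativity of `σ ↦ (b σ)⁻¹ * Φ σ` is equivalent to `c = δb`, by a
rearrangement that only needs `b σ` and `b (σ * τ)` to commute. -/

section GroupExtension

variable {G H : Type*} [Group G] [Group H]

theorem inv_mul_mul_inv_mul_eq_inv_mul_iff {u v w x y z : H} (h : Commute u w) :
    u⁻¹ * x * (v⁻¹ * y) = w⁻¹ * z ↔ x * y * z⁻¹ = x * v * x⁻¹ * w⁻¹ * u := by
  rw [mul_assoc _ w⁻¹ u, ← h.inv_right.eq]
  constructor
  · intro e
    obtain rfl : z = w * (u⁻¹ * x * (v⁻¹ * y)) := by rw [e]; group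
    group
  · intro e
    obtain rfl : z = (x * v * x⁻¹ * (u * w⁻¹))⁻¹ * (x * y) := by rw [← e]; group
    group

theorem exists_monoidHom_eq_inv_mul_of_coboundary {Φ b : G → H}
    (hb : ∀ σ τ, Commute (b σ) (b τ))
    (hc : ∀ σ τ, Φ σ * Φ τ * (Φ (σ * τ))⁻¹ = Φ σ * b τ * (Φ σ)⁻¹ * (b (σ * τ))⁻¹ * b σ) :
    ∃ ψ : G →* H, ∀ σ, ψ σ = (b σ)⁻¹ * Φ σ :=
  ⟨.mk' (fun σ => (b σ)⁻¹ * Φ σ) fun σ τ =>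
    (inv_mul_mul_inv_mul_eq_inv_mul_iff (hb σ (σ * τ))).2 (hc σ τ) |>.symm, fun _ => rfl⟩

theorem MonoidHom.cocycle_eq_coboundary_of_eq_inv_mul (ψ : G →* H) {Φ b : G → H}
    (hb : ∀ σ τ, Commute (b σ) (b τ)) (hψ : ∀ σ, ψ σ = (b σ)⁻¹ * Φ σ) (σ τ : G) :
    Φ σ * Φ τ * (Φ (σ * τ))⁻¹ = Φ σ * b τ * (Φ σ)⁻¹ * (b (σ * τ))⁻¹ * b σ :=
  (inv_mul_mul_inv_mul_eq_inv_mul_iff (hb σ (σ * τ))).1 <| by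
    rw [← hψ, ← hψ, ← hψ, map_mul]

end GroupExtension

theorem extension_of_group_action_general {F E : Type*} [Category F] [Category E] (p : F ⥤ E)
    {ξ ξ' : F}
    {G : Type*} [Group G] (ρ : G →* vertAut p ξ)
    (res : vertAut p ξ' →* vertAut p ξ)
    (hA : ∀ a b : vertAut p ξ', a ∈ res.ker → b ∈ res.ker → a * b = b * a) :
    (∃ ρ' : G →* vertAut p ξ', res.comp ρ' = ρ) ↔
      ((∀ σ : G, ρ σ ∈ res.range) ∧
        ∀ Φ : G → vertAut p ξ', (∀ σ : G, res (Φ σ) = ρ σ) →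
          ∃ b : G → vertAut p ξ', (∀ σ : G, b σ ∈ res.ker) ∧
            ∀ σ τ : G, Φ σ * Φ τ * (Φ (σ * τ))⁻¹ =
              (Φ σ * b τ * (Φ σ)⁻¹) * (b (σ * τ))⁻¹ * b σ) := by
  constructor
  · rintro ⟨ρ', rfl⟩
    refine ⟨fun σ => ⟨ρ' σ, rfl⟩, fun Φ hΦ => ?_⟩
    have hb : ∀ σ, Φ σ * (ρ' σ)⁻¹ ∈ res.ker := fun σ => by simp [hΦ]
    exact ⟨_, hb, ρ'.cocycle_eq_coboundary_of_eq_inv_mul (fun σ τ => hA _ _ (hb σ) (hb τ))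
      fun σ => by group⟩
  · rintro ⟨hsurj, hcob⟩
    choose Φ hΦ using hsurj
    obtain ⟨b, hb, hc⟩ := hcob Φ hΦ
    obtain ⟨ψ, hψ⟩ :=
      exists_monoidHom_eq_inv_mul_of_coboundary (fun σ τ => hA _ _ (hb σ) (hb τ)) hc
    exact ⟨ψ, MonoidHom.ext fun σ => by simp [hψ, hΦ, MonoidHom.mem_ker.1 (hb σ)]⟩

/-- Theorem 1.3: assume the kernel `A = Aut_ξ(ξ')` of the restriction homomorphism
`res : Aut_{S'}(ξ') → Aut_S(ξ)` is abelian.  A group homomorphism `ρ : G → Aut_S(ξ)`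
lifts to a homomorphism `ρ' : G → Aut_{S'}(ξ')` with `res ∘ ρ' = ρ` if and only if
(1) every `ρ(σ)` is in the image of `res`, and (2) for every set-theoretic lift
`Φ : G → Aut_{S'}(ξ')` of `ρ`, the `2`-cocycle `c(σ,τ) = Φ(σ)Φ(τ)Φ(στ)⁻¹` is a
`2`-coboundary. -/
theorem extension_of_group_action {F E : Type*} [Category F] [Category E] (p : F ⥤ E)
    {ξ ξ' : F} (f : ξ ⟶ ξ') (hf : IsCartesianMor p f)
    {G : Type*} [Group G] (ρ : G →* vertAut p ξ)
    (res : vertAut p ξ' →* vertAut p ξ)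
    (hres : ∀ σ' : vertAut p ξ',
      f ≫ (σ' : Aut ξ').hom = ((res σ' : Aut ξ)).hom ≫ f)
    (hA : ∀ a b : vertAut p ξ', a ∈ res.ker → b ∈ res.ker → a * b = b * a) :
    (∃ ρ' : G →* vertAut p ξ', res.comp ρ' = ρ) ↔
      ((∀ σ : G, ρ σ ∈ res.range) ∧
        ∀ Φ : G → vertAut p ξ', (∀ σ : G, res (Φ σ) = ρ σ) →
          ∃ b : G → vertAut p ξ', (∀ σ : G, b σ ∈ res.ker) ∧
            ∀ σ τ : G, Φ σ * Φ τ * (Φ (σ * τ))⁻¹ =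
              (Φ σ * b τ * (Φ σ)⁻¹) * (b (σ * τ))⁻¹ * b σ) :=
  extension_of_group_action_general p ρ res hA
end

section
/- Let k be a field of characteristic p > 0, G a finite group, P ⊆ G a Sylow p-subgroup, and V a k-vector space on which G acts by k-linear automorphisms such that V, regarded as a module over the group algebra k[P] via the restricted P-action, is a free k[P]-module. Let L be a nonempty V-torsor with group of operators G. Then L has a G-fixed point. -/
/-- A torsor `L` under an additive group `V` with a group of operators `G`: the
group `G` acts on the left on `V` by additive automorphisms and on the set `L`,
`L` carries a simply transitive right `V`-action, and the actions are compatible: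
`σ • (ξ · v) = (σ • ξ) · (σ • v)`. -/
structure AddTorsorWithOperators (G V L : Type*) [Group G] [AddGroup V]
    [DistribMulAction G V] [MulAction G L] where
  /-- the right action of `V` on `L`, written `ξ · v` -/
  act : L → V → L
  act_zero : ∀ ξ : L, act ξ 0 = ξ
  act_add : ∀ (ξ : L) (v w : V), act (act ξ v) w = act ξ (v + w)
  bijective : ∀ ξ : L, Function.Bijective (act ξ)
  compat : ∀ (σ : G) (ξ : L) (v : V), σ • act ξ v = act (σ • ξ) (σ • v)

/-- The `k`-linear `G`-action on `V`, restricted to a subgroup `P ≤ G`, viewed as a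
representation of `P` on `V`. -/
def restrictedRep {k : Type*} [Field k] {G : Type*} [Group G] (P : Subgroup G)
    {V : Type*} [AddCommGroup V] [Module k V] [DistribMulAction G V]
    [SMulCommClass G k V] : Representation k P V :=
  (DistribMulAction.toModuleEnd k V).comp P.subtype

/-!
For a base point `ξ`, sending `σ` to the `v` with `ξ · v = σ • ξ` is a `1`-cocycle of `G` in `V`,
and `ξ · (-w)` is a fixed point as soon as this cocycle is the coboundary of `w`.

On `P` the cocycle is a coboundary because `V` is free over `k[P]`: taking the coefficient at `1`
of each basis coordinate gives an additive `φ` with `∑ τ, τ • φ (τ⁻¹ • v) = v`, and then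
`∑ τ, τ • φ (c τ⁻¹)` trivialises any cocycle `c`. Restriction from `G` to `P` is injective on `H¹`
because `[G : P]` is invertible in `k`: after subtracting a coboundary the cocycle vanishes on `P`,
hence descends to `G ⧸ P`, and its sum over `G ⧸ P` divided by `[G : P]` trivialises it.
-/

open groupCohomology MonoidAlgebra

theorem isCoboundary₁_of_sum_smul_map_inv_smul_eq_self {P V : Type*} [Group P] [Fintype P]
    [AddCommGroup V] [DistribMulAction P V] (φ : V →+ V)
    (hφ : ∀ v, ∑ τ : P, τ • φ (τ⁻¹ • v) = v) {c : P → V} (hc : IsCocycle₁ c) :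
    IsCoboundary₁ c := by
  refine ⟨∑ τ : P, τ • φ (c τ⁻¹), fun σ => ?_⟩
  have hshift : σ • ∑ τ : P, τ • φ (c τ⁻¹) = ∑ τ : P, τ • φ (c (τ⁻¹ * σ)) := by
    rw [Finset.smul_sum]
    exact Fintype.sum_equiv (Equiv.mulLeft σ) _ _ fun τ => by simp [mul_smul]
  calc σ • ∑ τ : P, τ • φ (c τ⁻¹) - ∑ τ : P, τ • φ (c τ⁻¹)
      = ∑ τ : P, τ • φ (τ⁻¹ • c σ) := by
        simp [hshift, ← Finset.sum_sub_distrib, hc _ σ]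
    _ = c σ := hφ _

theorem MonoidAlgebra.sum_of_mul_single_one_coeff_of_inv_mul_eq_self {k P : Type*} [Semiring k]
    [Group P] [Fintype P] (x : k[P]) :
    ∑ τ : P, of k P τ * single 1 ((of k P τ⁻¹ * x).coeff 1) = x := by
  ext g
  simp [coeff_sum, of_apply]

theorem Module.Free.exists_sum_smul_map_inv_smul_eq_self {k P M : Type*} [Semiring k]
    [Group P] [Fintype P] [AddCommMonoid M] [Module k[P] M] [Module.Free k[P] M] :
    ∃ φ : M →+ M, ∀ m, ∑ τ : P, of k P τ • φ (of k P τ⁻¹ • m) = m := by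
  let b := Module.Free.chooseBasis k[P] M
  let π₁ : k[P] →+ k[P] :=
    { toFun := fun x => single 1 (x.coeff 1)
      map_zero' := by simp
      map_add' := fun x y => by simp [single_add] }
  refine ⟨b.repr.symm.toAddMonoidHom.comp
    ((Finsupp.mapRange.addMonoidHom π₁).comp b.repr.toAddMonoidHom), fun m => ?_⟩
  apply b.repr.injective
  ext i : 1
  simpa [Finsupp.finsetSum_apply, π₁] using
    sum_of_mul_single_one_coeff_of_inv_mul_eq_self (b.repr m i)

theorem Representation.exists_sum_map_map_inv_eq_self {k P V : Type*} [CommSemiring k] [Group P]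
    [Fintype P] [AddCommMonoid V] [Module k V] (ρ : Representation k P V)
    [Module.Free k[P] ρ.asModule] :
    ∃ φ : V →+ V, ∀ v, ∑ τ : P, ρ τ (φ (ρ τ⁻¹ v)) = v := by
  obtain ⟨φ, hφ⟩ :=
    Module.Free.exists_sum_smul_map_inv_smul_eq_self (k := k) (P := P) (M := ρ.asModule)
  refine ⟨ρ.asModuleEquiv.toAddMonoidHom.comp (φ.comp ρ.asModuleEquiv.symm.toAddMonoidHom),
    fun v => ?_⟩
  have h := congrArg ρ.asModuleEquiv (hφ (ρ.asModuleEquiv.symm v))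
  rw [map_sum] at h
  simp only [asModuleEquiv_map_smul, asAlgebraHom_of, ← asModuleEquiv_symm_map_rho,
    LinearEquiv.apply_symm_apply] at h
  exact h

theorem isCoboundary₁_of_free_restrictedRep {k G V : Type*} [Field k] [Group G]
    (P : Subgroup G) [Fintype P] [AddCommGroup V] [Module k V] [DistribMulAction G V]
    [SMulCommClass G k V] [Module.Free k[P] (restrictedRep (k := k) P (V := V)).asModule]
    {c : P → V} (hc : IsCocycle₁ c) : IsCoboundary₁ c := by
  obtain ⟨φ, hφ⟩ := (restrictedRep (k := k) P (V := V)).exists_sum_map_map_inv_eq_self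
  exact isCoboundary₁_of_sum_smul_map_inv_smul_eq_self φ hφ hc

theorem isCoboundary₁_of_forall_mem_subgroup_eq_zero {k G V : Type*} [DivisionRing k] [Group G]
    (H : Subgroup G) [H.FiniteIndex] (hH : (H.index : k) ≠ 0) [AddCommGroup V] [Module k V]
    [DistribMulAction G V] [SMulCommClass G k V] {c : G → V} (hc : IsCocycle₁ c)
    (h0 : ∀ h ∈ H, c h = 0) : IsCoboundary₁ c := by
  have hconst : ∀ a b : G, QuotientGroup.leftRel H a b → c a = c b := fun a b hab => by
    rw [← mul_inv_cancel_left a b, hc, h0 _ (QuotientGroup.leftRel_apply.mp hab), smul_zero,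
      zero_add]
  let c' : G ⧸ H → V := Quotient.lift c hconst
  have hc' : ∀ (τ : G) (x : G ⧸ H), c' (τ • x) = τ • c' x + c τ := fun τ x =>
    Quotient.inductionOn x fun σ => hc τ σ
  have : Fintype (G ⧸ H) := Fintype.ofFinite _
  let S := ∑ x : G ⧸ H, c' x
  have hS : ∀ τ : G, S - τ • S = (H.index : k) • c τ := fun τ => by
    have : S = τ • S + H.index • c τ := by
      calc S = ∑ x : G ⧸ H, c' (τ • x) := (Equiv.sum_comp (MulAction.toPerm τ) c').symm
        _ = τ • S + H.index • c τ := by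
          simp [S, hc', Finset.sum_add_distrib, Finset.smul_sum, Subgroup.index_eq_card]
    rw [Nat.cast_smul_eq_nsmul]
    nth_rw 1 [this]
    abel
  refine ⟨-((H.index : k)⁻¹ • S), fun τ => ?_⟩
  rw [smul_neg, smul_comm, sub_neg_eq_add, neg_add_eq_sub, ← smul_sub, hS, inv_smul_smul₀ hH]

theorem isCoboundary₁_of_isCoboundary₁_subgroup {k G V : Type*} [DivisionRing k] [Group G]
    (H : Subgroup G) [H.FiniteIndex] (hH : (H.index : k) ≠ 0) [AddCommGroup V] [Module k V]
    [DistribMulAction G V] [SMulCommClass G k V] {c : G → V} (hc : IsCocycle₁ c)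
    (hres : IsCoboundary₁ fun h : H => c h) : IsCoboundary₁ c := by
  obtain ⟨w, hw⟩ := hres
  obtain ⟨u, hu⟩ :=
    isCoboundary₁_of_forall_mem_subgroup_eq_zero (c := fun σ => c σ - (σ • w - w)) H hH
      (fun σ τ => by simp only [hc σ τ, mul_smul, smul_sub]; abel)
      (fun h hh => by simp [← hw ⟨h, hh⟩])
  exact ⟨u + w, fun σ => by simp only [smul_add, add_sub_add_comm, hu, sub_add_cancel]⟩

namespace AddTorsorWithOperators

variable {G V L : Type*} [Group G] [AddCommGroup V] [DistribMulAction G V] [MulAction G L]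
  (tor : AddTorsorWithOperators G V L)

noncomputable def diff (ξ η : L) : V := (Equiv.ofBijective _ (tor.bijective ξ)).symm η

theorem act_diff (ξ η : L) : tor.act ξ (tor.diff ξ η) = η :=
  (Equiv.ofBijective _ (tor.bijective ξ)).apply_symm_apply η

theorem isCocycle₁_diff_smul (ξ : L) : IsCocycle₁ fun σ : G => tor.diff ξ (σ • ξ) :=
  fun σ τ => (tor.bijective ξ).1 <| by
    rw [act_diff, add_comm, ← tor.act_add, act_diff, ← tor.compat, act_diff, mul_smul]

theorem exists_fixed_point_of_isCoboundary₁ (ξ : L)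
    (h : IsCoboundary₁ fun σ : G => tor.diff ξ (σ • ξ)) : ∃ η : L, ∀ σ : G, σ • η = η := by
  obtain ⟨w, hw⟩ := h
  refine ⟨tor.act ξ (-w), fun σ => ?_⟩
  have hσ : tor.diff ξ (σ • ξ) = σ • w - w := (hw σ).symm
  rw [tor.compat, ← tor.act_diff ξ (σ • ξ), tor.act_add, hσ, smul_neg, sub_eq_add_neg,
    add_neg_cancel_comm]

end AddTorsorWithOperators

/-- Let `k` be a field of characteristic `p > 0`, `G` a finite group acting
`k`-linearly on a `k`-vector space `V`, and `P` a Sylow `p`-subgroup of `G`.  If `V`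
is free as a module over the group algebra `k[P]` (via the restricted `P`-action),
then any nonempty `V`-torsor `L` with group of operators `G` has a `G`-fixed point. -/
theorem fixed_point_of_free_kP_module {p : ℕ} [Fact p.Prime]
    {k : Type*} [Field k] [CharP k p]
    {G : Type*} [Group G] [Finite G] (P : Sylow p G)
    {V L : Type*} [AddCommGroup V] [Module k V] [DistribMulAction G V]
    [SMulCommClass G k V] [MulAction G L] [Nonempty L]
    (hfree : Module.Free (MonoidAlgebra k (P : Subgroup G))
      (restrictedRep (k := k) (P : Subgroup G) (V := V)).asModule)
    (tor : AddTorsorWithOperators G V L) :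
    ∃ η : L, ∀ σ : G, σ • η = η := by
  obtain ⟨ξ⟩ := ‹Nonempty L›
  have := hfree
  have : Fintype P := Fintype.ofFinite _
  have hindex : ((P : Subgroup G).index : k) ≠ 0 := by
    rw [Ne, CharP.cast_eq_zero_iff k p]
    exact P.not_dvd_index
  have hc := tor.isCocycle₁_diff_smul ξ
  exact tor.exists_fixed_point_of_isCoboundary₁ ξ <|
    isCoboundary₁_of_isCoboundary₁_subgroup (P : Subgroup G) hindex hc <|
      isCoboundary₁_of_free_restrictedRep (k := k) (P : Subgroup G) fun σ τ => hc σ τ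
end
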